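/- arXiv:2011.02300 — 2 statements merged into one kernel-verified Lean document; each statement's English description precedes it below -/
import Mathlib

section
/- Let A > 0 and R > 0. For each n ∈ ℕ the function f(k_1) = (A/2) cos(2 k_1 R) e^{-2 k_1 R tan(2 k_1 R)} is strictly decreasing on the interval ((n-1)π/R, (4n-3)π/(4R)) intersected with (0,∞), where cos(2k_1 R) > 0; consequently the equation k_1 = f(k_1) has at most one solution in this interval. -/
open Real Set

/-- The function `f(k₁) = (A/2) cos(2k₁R) e^{-2k₁R tan(2k₁R)}`. -/
noncomputable def fRHS (A R k1 : ℝ) : ℝ :=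
  (A / 2) * Real.cos (2 * k1 * R) * Real.exp (-2 * k1 * R * Real.tan (2 * k1 * R))

/-- The interval `((n-1)π/R, (4n-3)π/(4R)) ∩ (0, ∞)`. -/
def Sint (R : ℝ) (n : ℕ) : Set ℝ :=
  Set.Ioo (((n : ℝ) - 1) * Real.pi / R) ((4 * (n : ℝ) - 3) * Real.pi / (4 * R)) ∩ Set.Ioi 0

/-!
Since `k ↦ 2kR` is increasing and sends `Sint R n` into `(2(n-1)π, 2(n-1)π + π/2) ∩ (0, ∞)`,
it suffices to see that `θ ↦ cos θ · exp (-θ tan θ)` decreases there. Up to the period `2π` this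
is the first quarter-period, where `cos` is positive and decreasing and `tan` is positive and
increasing; so `θ tan θ` increases for `θ > 0`, and the product of the two positive decreasing
factors decreases. A decreasing function meets the identity at most once.
-/

theorem AntitoneOn.subsingleton_setOf_eq_apply {α : Type*} [LinearOrder α] {f : α → α}
    {s : Set α} (hf : AntitoneOn f s) : {x ∈ s | x = f x}.Subsingleton := by
  rintro x ⟨hxs, hx⟩ y ⟨hys, hy⟩
  rcases le_total x y with hxy | hyx
  · exact le_antisymm hxy ((hy.trans_le (hf hxs hys hxy)).trans_eq hx.symm)
  · exact le_antisymm ((hx.trans_le (hf hys hxs hyx)).trans_eq hy.symm) hyx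

namespace Real

theorem tan_sub_int_mul_two_pi (x : ℝ) (n : ℤ) : tan (x - n * (2 * π)) = tan x := by
  rw [← tan_sub_int_mul_pi x (2 * n)]
  push_cast
  ring_nf

section QuarterPeriod

variable {m : ℤ} {θ : ℝ}

theorem cos_pos_of_mem_Ioo_int_mul_two_pi (h : θ ∈ Ioo (m * (2 * π)) (m * (2 * π) + π / 2)) :
    0 < cos θ := by
  rw [← cos_sub_int_mul_two_pi θ m]
  exact cos_pos_of_mem_Ioo ⟨by linarith [h.1, pi_pos], by linarith [h.2]⟩

theorem tan_pos_of_mem_Ioo_int_mul_two_pi (h : θ ∈ Ioo (m * (2 * π)) (m * (2 * π) + π / 2)) :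
    0 < tan θ := by
  rw [← tan_sub_int_mul_two_pi θ m]
  exact tan_pos_of_pos_of_lt_pi_div_two (by linarith [h.1]) (by linarith [h.2])

theorem strictAntiOn_cos_Ioo_int_mul_two_pi (m : ℤ) :
    StrictAntiOn cos (Ioo (m * (2 * π)) (m * (2 * π) + π / 2)) := by
  intro x hx y hy hxy
  rw [← cos_sub_int_mul_two_pi x m, ← cos_sub_int_mul_two_pi y m]
  exact strictAntiOn_cos ⟨by linarith [hx.1], by linarith [hx.2, pi_pos]⟩
    ⟨by linarith [hy.1], by linarith [hy.2, pi_pos]⟩ (by linarith)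

theorem strictMonoOn_tan_Ioo_int_mul_two_pi (m : ℤ) :
    StrictMonoOn tan (Ioo (m * (2 * π)) (m * (2 * π) + π / 2)) := by
  intro x hx y hy hxy
  rw [← tan_sub_int_mul_two_pi x m, ← tan_sub_int_mul_two_pi y m]
  exact strictMonoOn_tan ⟨by linarith [hx.1, pi_pos], by linarith [hx.2]⟩
    ⟨by linarith [hy.1, pi_pos], by linarith [hy.2]⟩ (by linarith)

theorem strictMonoOn_mul_tan_Ioo_int_mul_two_pi (m : ℤ) :
    StrictMonoOn (fun θ ↦ θ * tan θ) (Ioo (m * (2 * π)) (m * (2 * π) + π / 2) ∩ Ioi 0) :=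
  fun _ ⟨hx, hx0⟩ _ ⟨hy, _⟩ hxy ↦
    mul_lt_mul'' hxy (strictMonoOn_tan_Ioo_int_mul_two_pi m hx hy hxy) (le_of_lt hx0)
      (tan_pos_of_mem_Ioo_int_mul_two_pi hx).le

theorem strictAntiOn_cos_mul_exp_neg_mul_tan (m : ℤ) :
    StrictAntiOn (fun θ ↦ cos θ * exp (-(θ * tan θ)))
      (Ioo (m * (2 * π)) (m * (2 * π) + π / 2) ∩ Ioi 0) := by
  intro x hx y hy hxy
  have hcos : cos y < cos x := strictAntiOn_cos_Ioo_int_mul_two_pi m hx.1 hy.1 hxy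
  have hexp : exp (-(y * tan y)) < exp (-(x * tan x)) :=
    exp_lt_exp.mpr (neg_lt_neg (strictMonoOn_mul_tan_Ioo_int_mul_two_pi m hx hy hxy))
  exact mul_lt_mul'' hcos hexp (cos_pos_of_mem_Ioo_int_mul_two_pi hy.1).le (exp_pos _).le

end QuarterPeriod

end Real

theorem fRHS_eq (A R k : ℝ) :
    fRHS A R k = A / 2 * (cos (2 * k * R) * exp (-(2 * k * R * tan (2 * k * R)))) := by
  simp only [fRHS, neg_mul]
  ring

theorem mapsTo_two_mul_mul_Sint {R : ℝ} (hR : 0 < R) (n : ℕ) :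
    MapsTo (fun k ↦ 2 * k * R) (Sint R n)
      (Ioo ((n - 1 : ℤ) * (2 * π)) ((n - 1 : ℤ) * (2 * π) + π / 2) ∩ Ioi 0) := by
  rintro k ⟨⟨hlo, hhi⟩, hk⟩
  rw [div_lt_iff₀ hR] at hlo
  rw [lt_div_iff₀ (by positivity)] at hhi
  push_cast
  exact ⟨⟨by linarith, by linarith⟩, by simp only [mem_Ioi] at hk ⊢; positivity⟩

theorem fRHS_strictAnti_and_unique_fixed_point_general (A R : ℝ) (hA : 0 < A) (hR : 0 < R)
    (n : ℕ) :
    (∀ k1 ∈ Sint R n, 0 < Real.cos (2 * k1 * R)) ∧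
    StrictAntiOn (fRHS A R) (Sint R n) ∧
    Set.Subsingleton {k1 ∈ Sint R n | k1 = fRHS A R k1} := by
  have hmaps := mapsTo_two_mul_mul_Sint hR n
  have hanti : StrictAntiOn (fRHS A R) (Sint R n) := by
    intro x hx y hy hxy
    rw [fRHS_eq, fRHS_eq]
    exact mul_lt_mul_of_pos_left (strictAntiOn_cos_mul_exp_neg_mul_tan _ (hmaps hx) (hmaps hy)
      (by dsimp only; gcongr)) (half_pos hA)
  exact ⟨fun k hk ↦ cos_pos_of_mem_Ioo_int_mul_two_pi (hmaps hk).1, hanti,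
    hanti.antitoneOn.subsingleton_setOf_eq_apply⟩

/-- On the interval `((n-1)π/R, (4n-3)π/(4R)) ∩ (0,∞)` one has `cos(2k₁R) > 0`,
the function `f(k₁) = (A/2)cos(2k₁R)e^{-2k₁R tan(2k₁R)}` is strictly decreasing,
and consequently the equation `k₁ = f(k₁)` has at most one solution there. -/
theorem fRHS_strictAnti_and_unique_fixed_point (A R : ℝ) (hA : 0 < A) (hR : 0 < R)
    (n : ℕ) (hn : 1 ≤ n) :
    (∀ k1 ∈ Sint R n, 0 < Real.cos (2 * k1 * R)) ∧
    StrictAntiOn (fRHS A R) (Sint R n) ∧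
    Set.Subsingleton {k1 ∈ Sint R n | k1 = fRHS A R k1} :=
  fRHS_strictAnti_and_unique_fixed_point_general A R hA hR n
end

section
/- Let ν : ℝ → ℂ and χ(k,ξ) be defined by ν(-ξ) = -(1/(2π)) ln|1 - r_1(-ξ) r_2(-ξ)| - (i/(2π)) ∫_{-∞}^{-ξ} d arg(1 - r_1(ζ) r_2(ζ)) and χ(k,ξ) = -(1/(2πi)) ∫_{-∞}^{-ξ} ln(k - ζ) d_ζ ln(1 - r_1(ζ) r_2(ζ)). If ln(1 - r_1 r_2) is C^1 on (-∞,-ξ] with derivative integrable and appropriate decay at -∞, then the Cauchy integral δ(k,ξ) = exp( (1/(2πi)) ∫_{-∞}^{-ξ} ln(1-r_1(ζ)r_2(ζ))/(ζ-k) dζ ) admits the representation δ(k,ξ) = (k+ξ)^{iν(-ξ)} e^{χ(k,ξ)} for k ∈ ℂ \ (-∞,-ξ]. -/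
/-!
Integrate by parts with `u = L` and `v(ζ) = log (k - ζ)`, whose derivative is `1 / (ζ - k)`.
The boundary term at `-∞` has a limit `c`, because the derivative of `L(ζ) log (k - ζ)` is
integrable; and `c = 0`, since otherwise `L(ζ) / (ζ - k)` would be of exact order
`1 / (ζ log |ζ|)`, which is not integrable at `-∞` (its primitive `log log |ζ|` is unbounded).
Exponentiating, the boundary term `L(-ξ) log (k + ξ) / (2πi)` becomes `(k + ξ)^{iν(-ξ)}`.
-/

open Complex MeasureTheory Filter Set Asymptotics Topology

theorem not_integrableAtFilter_inv_mul_log_neg_atBot :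
    ¬ IntegrableAtFilter (fun x : ℝ => (x * Real.log (-x))⁻¹) atBot := by
  intro hI
  obtain ⟨a, ha⟩ := integrableAtFilter_atBot_iff.mp hI
  have hderiv : ∀ x ∈ Iic (min a (-2)), HasDerivAt (fun y : ℝ => Real.log (Real.log (-y)))
      (x * Real.log (-x))⁻¹ x := by
    intro x hx
    have hx : x ≤ -2 := hx.trans (min_le_right _ _)
    have hlog : 0 < Real.log (-x) := Real.log_pos (by linarith)
    convert ((hasDerivAt_neg x).log (by linarith)).log hlog.ne' using 1
    field_simp
  have htop : Tendsto (fun y : ℝ => Real.log (Real.log (-y))) atBot atTop :=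
    (Real.tendsto_log_atTop.comp Real.tendsto_log_atTop).comp tendsto_neg_atBot_atTop
  exact not_tendsto_nhds_of_tendsto_atTop htop _ <|
    tendsto_limUnder_of_hasDerivAt_of_integrableOn_Iic hderiv
      (ha.mono_set (Iic_subset_Iic.mpr (min_le_left _ _)))

theorem isBigO_clog_sub_atBot (k : ℂ) :
    (fun x : ℝ => log (k - x)) =O[atBot] (fun x : ℝ => Real.log (-x)) := by
  have hsmall : Tendsto (fun x : ℝ => 1 - k / x) atBot (𝓝 1) := by
    have hinv : Tendsto (fun x : ℝ => ((x⁻¹ : ℝ) : ℂ)) atBot (𝓝 0) := by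
      simpa [Function.comp_def] using (continuous_ofReal.tendsto 0).comp tendsto_inv_atBot_zero
    simpa [div_eq_mul_inv] using (hinv.const_mul k).const_sub 1
  have hsplit : ∀ᶠ x : ℝ in atBot, Real.log (-x) + log (1 - k / x) = log (k - x) := by
    filter_upwards [Iio_mem_atBot 0, hsmall.eventually_ne one_ne_zero] with x hx hne
    rw [← log_ofReal_mul (neg_pos.mpr hx) hne]
    have hx : (x : ℂ) ≠ 0 := ofReal_ne_zero.mpr hx.ne
    congr 1
    push_cast
    field_simp
    ring
  have hone : (fun _ : ℝ => (1 : ℝ)) =O[atBot] (fun x : ℝ => Real.log (-x)) :=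
    ((isLittleO_one_left_iff ℝ).mpr (tendsto_abs_atTop_atTop.comp
      (Real.tendsto_log_atTop.comp tendsto_neg_atBot_atTop))).isBigO
  refine IsBigO.congr' (IsBigO.add ?_ ?_) hsplit EventuallyEq.rfl
  · exact isBigO_of_le _ fun x => by simp
  · exact (((continuousAt_clog one_mem_slitPlane).tendsto.comp hsmall).isBigO_one ℝ).trans hone

theorem isBigO_ofReal_sub_atBot (k : ℂ) :
    (fun x : ℝ => (x : ℂ) - k) =O[atBot] (fun x : ℝ => x) := by
  have hone : (fun _ : ℝ => (1 : ℝ)) =O[atBot] (fun x : ℝ => x) :=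
    ((isLittleO_one_left_iff ℝ).mpr (by simpa using tendsto_abs_atBot_atTop)).isBigO
  exact (isBigO_of_le _ fun x => by simp).sub ((isBigO_const_one ℝ k _).trans hone)

theorem eq_zero_of_tendsto_mul_clog_sub_atBot {f : ℝ → ℂ} {k c : ℂ} {a : ℝ}
    (hf : IntegrableOn (fun x : ℝ => f x / (x - k)) (Iic a))
    (hc : Tendsto (fun x : ℝ => f x * log (k - x)) atBot (𝓝 c)) : c = 0 := by
  by_contra hc0
  have hne : ∀ᶠ x : ℝ in atBot, f x * log (k - x) ≠ 0 := hc.eventually_ne hc0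
  have hone : (fun _ : ℝ => (1 : ℝ)) =O[atBot] (fun x : ℝ => f x * log (k - x)) :=
    (isBigO_const_left_iff_pos_le_norm one_ne_zero).mpr
      ⟨‖c‖ / 2, by positivity, hc.norm.eventually (eventually_ge_nhds (by simp; positivity))⟩
  have hinv : (fun x : ℝ => (x * Real.log (-x))⁻¹) =O[atBot]
      (fun x : ℝ => (((x : ℂ) - k) * log (k - x))⁻¹) := by
    refine ((isBigO_ofReal_sub_atBot k).mul (isBigO_clog_sub_atBot k)).inv_rev ?_
    filter_upwards [hne, eventually_lt_atBot k.re] with x hfx hx hzero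
    have hxk : (x : ℂ) ≠ k := fun h => hx.ne (by simpa using congrArg re h)
    exact absurd hzero (mul_ne_zero (sub_ne_zero.mpr hxk) (right_ne_zero_of_mul hfx))
  apply not_integrableAtFilter_inv_mul_log_neg_atBot
  refine IsBigO.integrableAtFilter ?_ ?_ (integrableAtFilter_atBot_iff.mpr ⟨a, hf⟩)
  · refine (hone.mul hinv).congr' (by simp) ?_
    filter_upwards [hne] with x hfx
    rw [mul_inv, div_eq_mul_inv]
    field_simp [right_ne_zero_of_mul hfx]
  · exact (by fun_prop : Measurable fun x : ℝ => (x * Real.log (-x))⁻¹)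
      |>.stronglyMeasurable.stronglyMeasurableAtFilter

theorem sub_ofReal_mem_slitPlane {k : ℂ} {a x : ℝ} (hk : ∀ t : ℝ, t ≤ a → k ≠ t)
    (hx : x ≤ a) : k - x ∈ slitPlane := by
  rw [mem_slitPlane_iff]
  by_cases him : k.im = 0
  · left
    by_contra h
    exact hk k.re (by simp at h; linarith) (ext (by simp) (by simp [him]))
  · right
    simpa using him

theorem hasDerivAt_clog_sub_ofReal {k : ℂ} {x : ℝ} (hx : k - x ∈ slitPlane) :
    HasDerivAt (fun t : ℝ => log (k - t)) (1 / (x - k)) x := by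
  convert ((hasDerivAt_id (x : ℂ)).comp_ofReal.const_sub k).clog_real hx using 1
  · rfl
  · rw [← neg_sub, div_neg, neg_div]
    rfl

theorem integral_Iic_div_sub_eq {L L' : ℝ → ℂ} {k : ℂ} {a : ℝ}
    (hL : ∀ x ∈ Iic a, HasDerivAt L (L' x) x) (hk : ∀ t : ℝ, t ≤ a → k ≠ t)
    (hint : IntegrableOn (fun x : ℝ => L x / (x - k)) (Iic a))
    (hint' : IntegrableOn (fun x : ℝ => log (k - x) * L' x) (Iic a)) :
    ∫ x in Iic a, L x / (x - k) = L a * log (k - a) - ∫ x in Iic a, log (k - x) * L' x := by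
  have hprod : ∀ x ∈ Iic a, HasDerivAt (fun t : ℝ => L t * log (k - t))
      (log (k - x) * L' x + L x / (x - k)) x := fun x hx =>
    ((hL x hx).fun_mul (hasDerivAt_clog_sub_ofReal (sub_ofReal_mem_slitPlane hk hx))).congr_deriv
      (by ring)
  have hlim := tendsto_limUnder_of_hasDerivAt_of_integrableOn_Iic hprod (hint'.add hint)
  rw [eq_zero_of_tendsto_mul_clog_sub_atBot hint hlim] at hlim
  have hFTC := integral_Iic_of_hasDerivAt_of_tendsto' hprod (hint'.add hint) hlim
  rw [integral_add hint' hint] at hFTC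
  linear_combination hFTC

theorem delta_singular_representation_general
    (ξ : ℝ) (L : ℝ → ℂ)
    (hL : ContDiff ℝ 1 L)
    (k : ℂ) (hk : ∀ t : ℝ, t ≤ -ξ → k ≠ (t : ℂ))
    (hint : IntegrableOn (fun ζ : ℝ => L ζ / ((ζ : ℂ) - k)) (Set.Iic (-ξ)))
    (hint2 : IntegrableOn (fun ζ : ℝ => Complex.log (k - (ζ : ℂ)) * deriv L ζ)
      (Set.Iic (-ξ))) :
    Complex.exp ((1 / (2 * (Real.pi : ℂ) * Complex.I)) *
        ∫ ζ in Set.Iic (-ξ), L ζ / ((ζ : ℂ) - k)) =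
      (k + (ξ : ℂ)) ^ (Complex.I * (-(L (-ξ)) / (2 * (Real.pi : ℂ)))) *
        Complex.exp (-(1 / (2 * (Real.pi : ℂ) * Complex.I)) *
          ∫ ζ in Set.Iic (-ξ), Complex.log (k - (ζ : ℂ)) * deriv L ζ) := by
  have hderiv : ∀ x ∈ Iic (-ξ), HasDerivAt L (deriv L x) x :=
    fun x _ => (hL.differentiable one_ne_zero x).hasDerivAt
  have hkξ : k + ξ ≠ 0 := by
    simpa using slitPlane_ne_zero (sub_ofReal_mem_slitPlane hk le_rfl)
  rw [integral_Iic_div_sub_eq hderiv hk hint hint2, cpow_def_of_ne_zero hkξ, ← exp_add]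
  congr 1
  push_cast
  rw [sub_neg_eq_add]
  field_simp
  rw [I_sq]
  ring

/-- Integration by parts in the Cauchy integral: with `L` a continuous branch of
`ln(1-r₁r₂)` that is `C¹`, vanishes at `-∞`, and has integrable derivative, the
function `δ(k,ξ) = exp((1/2πi) ∫_{-∞}^{-ξ} L(ζ)/(ζ-k) dζ)` admits the representation
`δ(k,ξ) = (k+ξ)^{iν(-ξ)} e^{χ(k,ξ)}` with `ν(-ξ) = -L(-ξ)/(2π)` (which equals
`-(1/2π)ln|1-r₁r₂|(-ξ) - (i/2π)∫_{-∞}^{-ξ} d arg(1-r₁r₂)` for the normalized branch)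
and `χ(k,ξ) = -(1/2πi) ∫_{-∞}^{-ξ} ln(k-ζ) dL(ζ)`. -/
theorem delta_singular_representation
    (r1 r2 : ℝ → ℂ) (ξ : ℝ) (L : ℝ → ℂ)
    (hbranch : ∀ ζ : ℝ, Complex.exp (L ζ) = 1 - r1 ζ * r2 ζ)
    (hL : ContDiff ℝ 1 L)
    (hdecay : Tendsto L atBot (nhds 0))
    (hL'int : IntegrableOn (deriv L) (Set.Iic (-ξ)))
    (k : ℂ) (hk : ∀ t : ℝ, t ≤ -ξ → k ≠ (t : ℂ))
    (hint : IntegrableOn (fun ζ : ℝ => L ζ / ((ζ : ℂ) - k)) (Set.Iic (-ξ)))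
    (hint2 : IntegrableOn (fun ζ : ℝ => Complex.log (k - (ζ : ℂ)) * deriv L ζ)
      (Set.Iic (-ξ))) :
    Complex.exp ((1 / (2 * (Real.pi : ℂ) * Complex.I)) *
        ∫ ζ in Set.Iic (-ξ), L ζ / ((ζ : ℂ) - k)) =
      (k + (ξ : ℂ)) ^ (Complex.I * (-(L (-ξ)) / (2 * (Real.pi : ℂ)))) *
        Complex.exp (-(1 / (2 * (Real.pi : ℂ) * Complex.I)) *
          ∫ ζ in Set.Iic (-ξ), Complex.log (k - (ζ : ℂ)) * deriv L ζ) :=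
  delta_singular_representation_general ξ L hL k hk hint hint2
end
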